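/- arXiv:2505.07727 — 2 statements merged into one kernel-verified Lean document; each statement's English description precedes it below -/
import Mathlib

section
/- Let G be a graph on n vertices with independence number α(G) ≤ 2 such that oh(G) < ⌈n/2⌉, and such that every proper induced subgraph G′ of G satisfies oh(G′) ≥ ⌈|G′|/2⌉. Then the minimum degree satisfies δ(G) ≤ n − 4 and the maximum degree satisfies Δ(G) ≤ n − 3. -/
open SimpleGraph

/-- The spanning subgraph of `G` consisting of the edges that are bichromatic
(i.e. whose two endpoints receive different colors) under the 2-coloring `c`. -/
def SimpleGraph.bichromaticSubgraph {V : Type*} (G : SimpleGraph V) (c : V → Bool) :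
    SimpleGraph V where
  Adj u v := G.Adj u v ∧ c u ≠ c v
  symm := ⟨fun u v h => ⟨h.1.symm, h.2.symm⟩⟩
  loopless := ⟨fun v h => h.2 rfl⟩

/-- `G` contains an odd `K t` minor: there are `t` pairwise disjoint nonempty branch sets
and a 2-coloring of the vertices such that each branch set induces a connected subgraph
using only bichromatic edges (so it carries a spanning tree all of whose edges are
bichromatic), and every two branch sets are joined by a monochromatic edge of `G`. -/
def SimpleGraph.HasOddKMinor {V : Type*} (G : SimpleGraph V) (t : ℕ) : Prop :=
  ∃ (c : V → Bool) (B : Fin t → Set V),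
    (∀ i, (B i).Nonempty) ∧
    (Pairwise fun i j => Disjoint (B i) (B j)) ∧
    (∀ i, ((G.bichromaticSubgraph c).induce (B i)).Connected) ∧
    (∀ i j, i ≠ j → ∃ u ∈ B i, ∃ v ∈ B j, G.Adj u v ∧ c u = c v)

/-- `oh G` is the largest `t` such that `G` contains an odd `K t` minor. -/
noncomputable def SimpleGraph.oh {V : Type*} (G : SimpleGraph V) : ℕ :=
  sSup {t | G.HasOddKMinor t}

/-- The independence number of `G`. -/
noncomputable def SimpleGraph.indepNum' {V : Type*} (G : SimpleGraph V) : ℕ :=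
  Gᶜ.cliqueNum

/-- The join of two vertex-disjoint graphs: take the disjoint union and add all
edges between the two parts. -/
def SimpleGraph.joinG {α β : Type*} (G : SimpleGraph α) (H : SimpleGraph β) :
    SimpleGraph (α ⊕ β) where
  Adj u v := match u, v with
    | Sum.inl a, Sum.inl b => G.Adj a b
    | Sum.inr a, Sum.inr b => H.Adj a b
    | _, _ => True
  symm := by constructor; rintro (a | a) (b | b) h <;> first | exact h.symm | trivial
  loopless := by constructor; rintro (a | a) h <;> exact h.ne rfl

/-!
By minimality, deleting a nonempty set `R` of vertices leaves an odd minor of order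
`⌈(n - |R|)/2⌉`. Such a minor extends by any odd expansion with `|R|/2` branch sets inside `R`,
each containing a vertex complete to `G - R`: recolor the minor of `G - R` so that every one of
its branch sets contains a vertex of the same color as these dominating vertices. The result
is an odd `K ⌈n/2⌉` minor, which is excluded.

A vertex of degree at least `n - 2` is such a branch set on its own, with `R` its closed
non-neighbourhood. If every degree is `n - 3`, the complement is 2-regular and triangle-free
(as `α(G) ≤ 2`), so it is a disjoint union of cycles of length at least four; two or three
disjoint edges of `G` along such a cycle serve as the branch sets, and when the complement is a
single 4-cycle, `G` is `2K₂`, whose odd `K₂` minor is already too large.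
-/

namespace SimpleGraph

variable {V : Type*} {G : SimpleGraph V}

structure IsOddExpansion {ι : Type*} (G : SimpleGraph V) (c : V → Bool) (B : ι → Set V) :
    Prop where
  nonempty : ∀ i, (B i).Nonempty
  pairwise_disjoint : Pairwise fun i j => Disjoint (B i) (B j)
  connected : ∀ i, ((G.bichromaticSubgraph c).induce (B i)).Connected
  exists_adj : ∀ i j, i ≠ j → ∃ u ∈ B i, ∃ v ∈ B j, G.Adj u v ∧ c u = c v

theorem hasOddKMinor_iff {t : ℕ} :
    G.HasOddKMinor t ↔ ∃ c, ∃ B : Fin t → Set V, G.IsOddExpansion c B :=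
  ⟨fun ⟨c, B, h₁, h₂, h₃, h₄⟩ => ⟨c, B, h₁, h₂, h₃, h₄⟩,
    fun ⟨c, B, h⟩ => ⟨c, B, h.1, h.2, h.3, h.4⟩⟩

theorem IsOddExpansion.hasOddKMinor {t : ℕ} {c : V → Bool} {B : Fin t → Set V}
    (h : G.IsOddExpansion c B) : G.HasOddKMinor t :=
  hasOddKMinor_iff.mpr ⟨c, B, h⟩

theorem hasOddKMinor_zero : G.HasOddKMinor 0 :=
  ⟨fun _ => true, finZeroElim, finZeroElim, finZeroElim, finZeroElim, finZeroElim⟩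

theorem HasOddKMinor.mono {s t : ℕ} (h : G.HasOddKMinor t) (hst : s ≤ t) :
    G.HasOddKMinor s := by
  obtain ⟨c, B, h₁, h₂, h₃, h₄⟩ := h
  exact ⟨c, B ∘ Fin.castLE hst, fun i => h₁ _, fun i j hij => h₂ fun h => hij
    (Fin.castLE_injective hst h), fun i => h₃ _,
    fun i j hij => h₄ _ _ fun h => hij (Fin.castLE_injective hst h)⟩

theorem HasOddKMinor.le_card [Finite V] {t : ℕ} (h : G.HasOddKMinor t) : t ≤ Nat.card V := by
  obtain ⟨c, B, h⟩ := hasOddKMinor_iff.mp h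
  choose x hx using h.nonempty
  have hx_inj : Function.Injective x := fun i j hij => by
    by_contra hne
    exact Set.disjoint_left.mp (h.pairwise_disjoint hne) (hx i) (hij ▸ hx j)
  simpa using Nat.card_le_card_of_injective x hx_inj

theorem hasOddKMinor_iff_le_oh [Finite V] {t : ℕ} : G.HasOddKMinor t ↔ t ≤ G.oh := by
  have hbdd : BddAbove {t | G.HasOddKMinor t} := ⟨Nat.card V, fun _ ht => ht.le_card⟩
  exact ⟨fun h => le_csSup hbdd h, (Nat.sSup_mem ⟨0, hasOddKMinor_zero⟩ hbdd).mono⟩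

namespace IsOddExpansion

variable {ι : Type*} {c c' : V → Bool} {B : ι → Set V}

theorem congr_color (h : G.IsOddExpansion c B) (hc : ∀ i, ∀ x ∈ B i, c x = c' x) :
    G.IsOddExpansion c' B where
  nonempty := h.nonempty
  pairwise_disjoint := h.pairwise_disjoint
  connected i := by
    convert h.connected i using 1
    ext x y
    simp [bichromaticSubgraph, hc i x x.2, hc i y y.2]
  exists_adj i j hij := by
    obtain ⟨u, hu, v, hv, huv, hc'⟩ := h.exists_adj i j hij
    exact ⟨u, hu, v, hv, huv, by rw [← hc i u hu, ← hc j v hv, hc']⟩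

theorem comp_injective (h : G.IsOddExpansion c B) {f : Bool → Bool}
    (hf : Function.Injective f) : G.IsOddExpansion (f ∘ c) B where
  nonempty := h.nonempty
  pairwise_disjoint := h.pairwise_disjoint
  connected i := by
    convert h.connected i using 1
    ext x y
    simp [bichromaticSubgraph, hf.ne_iff]
  exists_adj i j hij := by
    obtain ⟨u, hu, v, hv, huv, hc⟩ := h.exists_adj i j hij
    exact ⟨u, hu, v, hv, huv, by simp [hc]⟩

theorem exists_color_forall_exists_mem (h : G.IsOddExpansion c B) :
    ∃ b, ∀ i, ∃ x ∈ B i, c x = b := by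
  by_cases hmono : ∃ i b, ∀ x ∈ B i, c x = b
  · obtain ⟨i, b, hi⟩ := hmono
    refine ⟨b, fun j => ?_⟩
    obtain rfl | hij := eq_or_ne i j
    · obtain ⟨x, hx⟩ := h.nonempty i
      exact ⟨x, hx, hi x hx⟩
    · obtain ⟨u, hu, v, hv, -, huv⟩ := h.exists_adj i j hij
      exact ⟨v, hv, huv ▸ hi u hu⟩
  · push Not at hmono
    refine ⟨true, fun i => ?_⟩
    obtain ⟨x, hx, hcx⟩ := hmono i false
    exact ⟨x, hx, by simpa using hcx⟩

theorem exists_forall_exists_mem_true (h : G.IsOddExpansion c B) :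
    ∃ c', G.IsOddExpansion c' B ∧ ∀ i, ∃ x ∈ B i, c' x = true := by
  obtain ⟨b, hb⟩ := h.exists_color_forall_exists_mem
  cases b
  · exact ⟨not ∘ c, h.comp_injective fun _ _ => Bool.not_inj, by simpa using hb⟩
  · exact ⟨c, h, hb⟩

theorem image_val {s : Set V} {B : ι → Set s} (h : (G.induce s).IsOddExpansion (c ∘ (↑)) B) :
    G.IsOddExpansion c fun i => Subtype.val '' B i where
  nonempty i := (h.nonempty i).image _
  pairwise_disjoint i j hij := (Set.disjoint_image_iff Subtype.val_injective).mpr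
    (h.pairwise_disjoint hij)
  connected i := by
    let f : (((G.induce s).bichromaticSubgraph (c ∘ (↑))).induce (B i)) →g
        ((G.bichromaticSubgraph c).induce (Subtype.val '' B i)) :=
      ⟨fun x => ⟨x.1.1, x.1, x.2, rfl⟩, fun hxy => hxy⟩
    refine (h.connected i).map f ?_
    rintro ⟨_, x, hx, rfl⟩
    exact ⟨⟨x, hx⟩, rfl⟩
  exists_adj i j hij := by
    obtain ⟨u, hu, v, hv, huv, hc⟩ := h.exists_adj i j hij
    exact ⟨u, ⟨u, hu, rfl⟩, v, ⟨v, hv, rfl⟩, huv, hc⟩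

theorem append {m n : ℕ} {A : Fin m → Set V} {B : Fin n → Set V}
    (hA : G.IsOddExpansion c A) (hB : G.IsOddExpansion c B)
    (hdisj : ∀ i j, Disjoint (A i) (B j))
    (hadj : ∀ i j, ∃ u ∈ A i, ∃ v ∈ B j, G.Adj u v ∧ c u = c v) :
    G.IsOddExpansion c (Fin.append A B) where
  nonempty k := by
    cases k using Fin.addCases
    · simpa using hA.nonempty _
    · simpa using hB.nonempty _
  pairwise_disjoint k l hkl := by
    cases k using Fin.addCases <;> cases l using Fin.addCases <;>
      simp only [Fin.append_left, Fin.append_right]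
    · exact hA.pairwise_disjoint fun h => hkl (h ▸ rfl)
    · exact hdisj _ _
    · exact (hdisj _ _).symm
    · exact hB.pairwise_disjoint fun h => hkl (h ▸ rfl)
  connected k := by
    cases k using Fin.addCases
    · exact (Fin.append_left A B _).symm ▸ hA.connected _
    · exact (Fin.append_right A B _).symm ▸ hB.connected _
  exists_adj k l hkl := by
    cases k using Fin.addCases <;> cases l using Fin.addCases <;>
      simp only [Fin.append_left, Fin.append_right]
    · exact hA.exists_adj _ _ fun h => hkl (h ▸ rfl)
    · exact hadj _ _
    · obtain ⟨u, hu, v, hv, huv, hc⟩ := hadj _ _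
      exact ⟨v, hv, u, hu, huv.symm, hc.symm⟩
    · exact hB.exists_adj _ _ fun h => hkl (h ▸ rfl)

end IsOddExpansion

theorem isOddExpansion_singleton_of_pairwise_adj {m : ℕ} {f : Fin m → V}
    (hf : Pairwise fun i j => G.Adj (f i) (f j)) (b : Bool) :
    G.IsOddExpansion (fun _ => b) fun i => {f i} where
  nonempty i := Set.singleton_nonempty _
  pairwise_disjoint i j hij := Set.disjoint_singleton.mpr (hf hij).ne
  connected i := by simp
  exists_adj i j hij := ⟨f i, rfl, f j, rfl, hf hij, rfl⟩

theorem isOddExpansion_pairs {m : ℕ} {a b : Fin m → V} {c : V → Bool}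
    (ha : Function.Injective a) (hb : Function.Injective b)
    (hca : ∀ i, c (a i) = true) (hcb : ∀ i, c (b i) = false) (hab : ∀ i, G.Adj (a i) (b i))
    (hcross : Pairwise fun i j => G.Adj (a i) (a j) ∨ G.Adj (b i) (b j)) :
    G.IsOddExpansion c fun i => {a i, b i} where
  nonempty i := Set.insert_nonempty _ _
  pairwise_disjoint i j hij := by
    have hne : ∀ i j, a i ≠ b j := fun i j h => by simpa [hca, hcb] using congrArg c h
    refine Set.disjoint_left.mpr ?_
    rintro x (rfl | rfl) (h | h)
    · exact ha.ne hij h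
    · exact hne _ _ h
    · exact hne _ _ h.symm
    · exact hb.ne hij h
  connected i := induce_pair_connected_of_adj ⟨hab i, by simp [hca, hcb]⟩
  exists_adj i j hij := by
    rcases hcross hij with h | h
    · exact ⟨a i, by simp, a j, by simp, h, by rw [hca, hca]⟩
    · exact ⟨b i, by simp, b j, by simp, h, by rw [hcb, hcb]⟩

theorem oh_induce_add_le [Finite V] (s : Set V) {m : ℕ} {c : V → Bool} {N : Fin m → Set V}
    (hN : G.IsOddExpansion c N) (hNs : ∀ i, Disjoint (N i) s)
    (hdom : ∀ i, ∃ d ∈ N i, c d = true ∧ ∀ y ∈ s, G.Adj d y) :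
    (G.induce s).oh + m ≤ G.oh := by
  classical
  obtain ⟨c₀, B, hB⟩ := hasOddKMinor_iff.mp
    (hasOddKMinor_iff_le_oh (G := G.induce s).mpr le_rfl)
  obtain ⟨c₁, hB, hBc⟩ := hB.exists_forall_exists_mem_true
  let c' : V → Bool := fun x => if hx : x ∈ s then c₁ ⟨x, hx⟩ else c x
  have hB' : G.IsOddExpansion c' fun i => Subtype.val '' B i :=
    IsOddExpansion.image_val (by convert hB; ext x; simp [c'])
  have hN' : G.IsOddExpansion c' N :=
    hN.congr_color fun i x hx => by simp [c', Set.disjoint_left.mp (hNs i) hx]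
  refine hasOddKMinor_iff_le_oh.mp (hB'.append hN' (fun i j => ?_) fun i j => ?_).hasOddKMinor
  · rw [Set.disjoint_left]
    rintro _ ⟨x, -, rfl⟩ hx
    exact Set.disjoint_right.mp (hNs j) x.2 hx
  · obtain ⟨x, hx, hcx⟩ := hBc i
    obtain ⟨d, hd, hcd, hds⟩ := hdom j
    refine ⟨x, ⟨x, hx, rfl⟩, d, hd, (hds x x.2).symm, ?_⟩
    simp [c', hcx, hcd, Set.disjoint_left.mp (hNs j) hd]

theorem exists_forall_adj_iff_of_degree_eq_two [DecidableEq V] {H : SimpleGraph V} {v a : V}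
    [Fintype (H.neighborSet v)] (hv : H.degree v = 2) (ha : H.Adj v a) :
    ∃ b, b ≠ a ∧ ∀ x, H.Adj v x ↔ x = a ∨ x = b := by
  have ha' : a ∈ H.neighborFinset v := by simpa
  obtain ⟨b, hb⟩ := Finset.card_eq_one.mp <| show ((H.neighborFinset v).erase a).card = 1 by
    rw [Finset.card_erase_of_mem ha', card_neighborFinset_eq_degree, hv]
  refine ⟨b, (Finset.mem_erase.mp (hb ▸ Finset.mem_singleton_self b)).1, fun x => ?_⟩
  rw [← mem_neighborFinset, ← Finset.insert_erase ha', hb]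
  simp

theorem forall_adj_iff_of_degree_eq_two [DecidableEq V] {H : SimpleGraph V} {v a b : V}
    [Fintype (H.neighborSet v)] (hv : H.degree v = 2) (hab : a ≠ b) (ha : H.Adj v a)
    (hb : H.Adj v b) : ∀ x, H.Adj v x ↔ x = a ∨ x = b := by
  obtain ⟨b', -, hb'⟩ := exists_forall_adj_iff_of_degree_eq_two hv ha
  obtain rfl | rfl := (hb' b).mp hb
  · exact absurd rfl hab
  · exact hb'

theorem adj_of_forall_compl_adj_iff {v a b y : V} (hv : ∀ x, Gᶜ.Adj v x ↔ x = a ∨ x = b)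
    (hyv : y ≠ v) (hya : y ≠ a) (hyb : y ≠ b) : G.Adj v y :=
  not_not.mp fun h => ((hv y).mp ⟨hyv.symm, h⟩).elim hya hyb

section Minimal

variable [Fintype V]
  (hmin : ∀ s : Finset V, s ≠ Finset.univ → (s.card + 1) / 2 ≤ (G.induce (s : Set V)).oh)
include hmin

theorem card_add_one_div_two_le_oh_of_dominating {R : Finset V} (hR : R.Nonempty) {m : ℕ}
    {c : V → Bool} {N : Fin m → Set V} (hN : G.IsOddExpansion c N) (hNR : ∀ i, N i ⊆ R)
    (hcard : R.card ≤ 2 * m) (hdom : ∀ i, ∃ d ∈ N i, c d = true ∧ ∀ y ∉ R, G.Adj d y) :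
    (Fintype.card V + 1) / 2 ≤ G.oh := by
  classical
  have hRc := hmin Rᶜ (by simpa [Finset.compl_eq_univ_iff] using hR.ne_empty)
  have hoh := oh_induce_add_le ((Rᶜ : Finset V) : Set V) hN
    (fun i => Set.disjoint_left.mpr fun x hx => by simpa using hNR i hx)
    (fun i => by simpa using hdom i)
  rw [Finset.card_compl] at hRc
  have := R.card_le_univ
  omega

theorem card_add_one_div_two_le_oh_of_pairs {m : ℕ} [NeZero m] {a b : Fin m → V} {c : V → Bool}
    (ha : Function.Injective a) (hb : Function.Injective b)
    (hca : ∀ i, c (a i) = true) (hcb : ∀ i, c (b i) = false) (hab : ∀ i, G.Adj (a i) (b i))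
    (hcross : Pairwise fun i j => G.Adj (a i) (a j) ∨ G.Adj (b i) (b j))
    (hdom : ∀ i y, (∀ j, y ≠ a j) → (∀ j, y ≠ b j) → G.Adj (a i) y) :
    (Fintype.card V + 1) / 2 ≤ G.oh := by
  classical
  refine card_add_one_div_two_le_oh_of_dominating hmin (R := .image a .univ ∪ .image b .univ)
    ⟨a 0, by simp⟩ (isOddExpansion_pairs ha hb hca hcb hab hcross) (fun i => ?_) ?_
    fun i => ⟨a i, by simp, hca i, fun y hy => hdom i y (fun j h => hy ?_) fun j h => hy ?_⟩
  · simp [Set.insert_subset_iff]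
  · grw [Finset.card_union_le, Finset.card_image_le, Finset.card_image_le]
    simp [two_mul]
  all_goals simp [h]

theorem card_add_one_div_two_le_oh_of_card_le_degree_add_two [DecidableRel G.Adj] {v : V}
    (hv : Fintype.card V ≤ G.degree v + 2) : (Fintype.card V + 1) / 2 ≤ G.oh := by
  classical
  refine card_add_one_div_two_le_oh_of_dominating hmin (R := (G.neighborFinset v)ᶜ) (m := 1)
    ⟨v, by simp⟩ (isOddExpansion_singleton_of_pairwise_adj (f := fun _ => v)
      (Subsingleton.pairwise) true) (fun _ => by simp) ?_ fun _ => ⟨v, rfl, rfl, by simp⟩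
  rw [Finset.card_compl, card_neighborFinset_eq_degree]
  omega

theorem card_add_one_div_two_le_oh_of_compl_path {v u₁ w₁ u' : V}
    (hv : ∀ x, Gᶜ.Adj v x ↔ x = u₁ ∨ x = w₁) (hu₁ : ∀ x, Gᶜ.Adj u₁ x ↔ x = v ∨ x = u')
    (hu'v : u' ≠ v) (hu₁w₁ : G.Adj u₁ w₁) (hu'w₁ : G.Adj u' w₁) :
    (Fintype.card V + 1) / 2 ≤ G.oh := by
  classical
  have hvu₁ : v ≠ u₁ := ((hv u₁).2 (.inl rfl)).ne
  have hvw₁ : v ≠ w₁ := ((hv w₁).2 (.inr rfl)).ne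
  have hu₁u' : u₁ ≠ u' := ((hu₁ u').2 (.inr rfl)).ne
  have hvu' : G.Adj v u' := adj_of_forall_compl_adj_iff hv hu'v hu₁u'.symm hu'w₁.ne
  refine card_add_one_div_two_le_oh_of_pairs hmin (a := ![v, u₁]) (b := ![u', w₁])
    (c := fun x => decide (x = v ∨ x = u₁)) ?_ ?_ ?_ ?_ ?_ ?_ ?_
  · simp [Function.Injective, Fin.forall_fin_two, hvu₁, hvu₁.symm]
  · simp [Function.Injective, Fin.forall_fin_two, hu'w₁.ne, hu'w₁.ne.symm]
  · simp [Fin.forall_fin_two]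
  · simp [Fin.forall_fin_two, hu'v, hu₁u'.symm, hvw₁.symm, hu₁w₁.ne.symm]
  · simp [Fin.forall_fin_two, hvu', hu₁w₁]
  · intro i j hij
    fin_cases i <;> fin_cases j <;> simp_all [hu'w₁.symm]
  · intro i y hya hyb
    simp only [Fin.forall_fin_two] at hya hyb
    fin_cases i
    · exact adj_of_forall_compl_adj_iff hv hya.1 hya.2 hyb.2
    · exact adj_of_forall_compl_adj_iff hu₁ hya.2 hya.1 hyb.1

theorem card_add_one_div_two_le_oh_of_compl_cycle_four {v u₁ u' w₁ y y' : V}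
    (hv : ∀ x, Gᶜ.Adj v x ↔ x = u₁ ∨ x = w₁) (hu₁ : ∀ x, Gᶜ.Adj u₁ x ↔ x = v ∨ x = u')
    (hu' : ∀ x, Gᶜ.Adj u' x ↔ x = u₁ ∨ x = w₁) (hw₁ : ∀ x, Gᶜ.Adj w₁ x ↔ x = v ∨ x = u')
    (hu'v : u' ≠ v) (hu₁w₁ : G.Adj u₁ w₁)
    (hy : y ≠ v ∧ y ≠ u₁ ∧ y ≠ u' ∧ y ≠ w₁) (hyy' : Gᶜ.Adj y y') :
    (Fintype.card V + 1) / 2 ≤ G.oh := by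
  classical
  obtain ⟨hyv, hyu₁, hyu', hyw₁⟩ := hy
  have hvu₁ : v ≠ u₁ := ((hv u₁).2 (.inl rfl)).ne
  have hvw₁ : v ≠ w₁ := ((hv w₁).2 (.inr rfl)).ne
  have hu₁u' : u₁ ≠ u' := ((hu₁ u').2 (.inr rfl)).ne
  have hu'w₁ : u' ≠ w₁ := ((hu' w₁).2 (.inr rfl)).ne
  have hy'y : y' ≠ y := hyy'.ne.symm
  have hy'v : y' ≠ v := by rintro rfl; exact ((hv y).mp hyy'.symm).elim hyu₁ hyw₁
  have hy'u₁ : y' ≠ u₁ := by rintro rfl; exact ((hu₁ y).mp hyy'.symm).elim hyv hyu'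
  have hy'u' : y' ≠ u' := by rintro rfl; exact ((hu' y).mp hyy'.symm).elim hyu₁ hyw₁
  have hy'w₁ : y' ≠ w₁ := by rintro rfl; exact ((hw₁ y).mp hyy'.symm).elim hyv hyu'
  refine card_add_one_div_two_le_oh_of_pairs hmin (a := ![v, u₁, w₁]) (b := ![u', y, y'])
    (c := fun x => decide (x = v ∨ x = u₁ ∨ x = w₁)) ?_ ?_ ?_ ?_ ?_ ?_ ?_
  · simp [Function.Injective, Fin.forall_fin_succ, hvu₁, hvw₁, hvu₁.symm, hvw₁.symm,
      hu₁w₁.ne, hu₁w₁.ne.symm]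
  · simp [Function.Injective, Fin.forall_fin_succ, hyu'.symm, hy'u'.symm, hyu', hy'u', hy'y,
      hy'y.symm]
  · simp [Fin.forall_fin_succ]
  · simp [Fin.forall_fin_succ, hu₁u'.symm, *]
  · simp only [Fin.forall_fin_succ, IsEmpty.forall_iff, and_true]
    exact ⟨adj_of_forall_compl_adj_iff hv hu'v hu₁u'.symm hu'w₁,
      adj_of_forall_compl_adj_iff hu₁ hyu₁ hyv hyu',
      adj_of_forall_compl_adj_iff hw₁ hy'w₁ hy'v hy'u'⟩
  · have hu'y : G.Adj u' y := adj_of_forall_compl_adj_iff hu' hyu' hyu₁ hyw₁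
    have hu'y' : G.Adj u' y' := adj_of_forall_compl_adj_iff hu' hy'u' hy'u₁ hy'w₁
    intro i j hij
    fin_cases i <;> fin_cases j <;> simp_all [hu'y.symm, hu'y'.symm, hu₁w₁.symm]
  · intro i z hza hzb
    simp only [Fin.forall_fin_succ, IsEmpty.forall_iff, and_true] at hza hzb
    fin_cases i
    · exact adj_of_forall_compl_adj_iff hv hza.1 hza.2.1 hza.2.2
    · exact adj_of_forall_compl_adj_iff hu₁ hza.2.1 hza.1 hzb.1
    · exact adj_of_forall_compl_adj_iff hw₁ hza.2.2 hza.1 hzb.1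

theorem card_add_one_div_two_le_oh_of_degree_compl_eq_two [DecidableEq V] [DecidableRel G.Adj]
    (htriangle : Gᶜ.CliqueFree 3) (h2 : ∀ v, Gᶜ.degree v = 2) :
    (Fintype.card V + 1) / 2 ≤ G.oh := by
  obtain hV | ⟨⟨v⟩⟩ := isEmpty_or_nonempty V
  · simp
  obtain ⟨u₁, hvu₁⟩ := (Gᶜ.degree_pos_iff_exists_adj v).mp (by rw [h2]; norm_num)
  obtain ⟨w₁, hw₁u₁, hv⟩ := exists_forall_adj_iff_of_degree_eq_two (h2 v) hvu₁
  obtain ⟨u', hu'v, hu₁⟩ := exists_forall_adj_iff_of_degree_eq_two (h2 u₁) hvu₁.symm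
  have hu₁w₁ : G.Adj u₁ w₁ := not_not.mp fun h => htriangle {v, u₁, w₁} <|
    is3Clique_triple_iff.mpr ⟨hvu₁, (hv w₁).2 (.inr rfl), (compl_adj G u₁ w₁).mpr ⟨hw₁u₁.symm, h⟩⟩
  have hu₁u' : Gᶜ.Adj u₁ u' := (hu₁ u').2 (.inr rfl)
  have hu'w₁ne : u' ≠ w₁ := by rintro rfl; exact ((compl_adj G _ _).mp hu₁u').2 hu₁w₁
  by_cases hu'w₁ : ¬Gᶜ.Adj u' w₁
  · exact card_add_one_div_two_le_oh_of_compl_path hmin hv hu₁ hu'v hu₁w₁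
      (not_not.mp fun h => hu'w₁ ((compl_adj G u' w₁).mpr ⟨hu'w₁ne, h⟩))
  rw [not_not] at hu'w₁
  have hu' := forall_adj_iff_of_degree_eq_two (h2 u') hu₁w₁.ne hu₁u'.symm hu'w₁
  have hw₁ := forall_adj_iff_of_degree_eq_two (h2 w₁) hu'v.symm ((hv w₁).2 (.inr rfl)).symm
    hu'w₁.symm
  by_cases hy : ∃ y, y ≠ v ∧ y ≠ u₁ ∧ y ≠ u' ∧ y ≠ w₁
  · obtain ⟨y, hy⟩ := hy
    obtain ⟨y', hyy'⟩ := (Gᶜ.degree_pos_iff_exists_adj y).mp (by rw [h2]; norm_num)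
    exact card_add_one_div_two_le_oh_of_compl_cycle_four hmin hv hu₁ hu' hw₁ hu'v hu₁w₁ hy hyy'
  · push Not at hy
    have hcard : Fintype.card V ≤ 4 := by
      refine (Finset.card_le_card fun y _ => ?_).trans (Finset.card_le_four (a := v) (b := u₁)
        (c := u') (d := w₁))
      by_contra h
      simp only [Finset.mem_insert, Finset.mem_singleton, not_or] at h
      exact h.2.2.2 (hy y h.1 h.2.1 h.2.2.1)
    have hvu' : G.Adj v u' := adj_of_forall_compl_adj_iff hv hu'v hu₁u'.ne' hu'w₁ne
    have hK₂ : G.IsOddExpansion (fun _ => true) fun i => {![v, u'] i} :=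
      isOddExpansion_singleton_of_pairwise_adj (fun i j hij => by
        fin_cases i <;> fin_cases j
        exacts [absurd rfl hij, hvu', hvu'.symm, absurd rfl hij]) true
    have := hasOddKMinor_iff_le_oh.mp hK₂.hasOddKMinor
    omega

end Minimal

end SimpleGraph

theorem statement11 {V : Type*} [Fintype V] (G : SimpleGraph V) [DecidableRel G.Adj]
    (hα : G.indepNum' ≤ 2) (hoh : G.oh < (Fintype.card V + 1) / 2)
    (hmin : ∀ s : Finset V, s ≠ Finset.univ →
      (s.card + 1) / 2 ≤ (G.induce (s : Set V)).oh) :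
    (G.minDegree : ℤ) ≤ (Fintype.card V : ℤ) - 4 ∧
      (G.maxDegree : ℤ) ≤ (Fintype.card V : ℤ) - 3 := by
  classical
  have htriangle : Gᶜ.CliqueFree 3 := fun s hs => by
    have := hs.isClique.card_le_cliqueNum
    rw [hs.card_eq] at this
    exact absurd (this.trans hα) (by norm_num)
  have hdeg : ∀ v, G.degree v + 3 ≤ Fintype.card V := fun v => by
    by_contra! h
    have := card_add_one_div_two_le_oh_of_card_le_degree_add_two hmin (v := v) (by omega)
    omega
  obtain ⟨v, hv⟩ : ∃ v, G.degree v + 4 ≤ Fintype.card V := by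
    by_contra! h
    have := card_add_one_div_two_le_oh_of_degree_compl_eq_two hmin htriangle fun v => by
      have := hdeg v
      have := h v
      rw [degree_compl]
      omega
    omega
  have := G.minDegree_le_degree v
  have := G.maxDegree_le_of_forall_degree_le _ fun v => Nat.le_sub_of_add_le (hdeg v)
  omega
end

section
/- Let G be a graph on n vertices with independence number α(G) ≤ 2 such that oh(G) < ⌈n/2⌉, and such that every proper induced subgraph G′ of G satisfies oh(G′) ≥ ⌈|G′|/2⌉. Then for every nonempty clique K in G: K is not complete to V(G) \ K, the induced subgraph G \ K is connected, and α(G \ K) = 2. -/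
open SimpleGraph

/-!
Every odd expansion has a color met by all its branch sets. So if a nonempty clique `K` were
complete to `S = V \ K`, the vertices of `K`, colored with that color, could be added as
singleton branch sets to an optimal odd expansion of `G[S]`, and minimality would give
`oh G ≥ ⌈|S|/2⌉ + |K| ≥ ⌈n/2⌉`. The other two claims come from the fact that `V` is not the
union of two cliques, since the larger one would be an odd clique minor of size `⌈n/2⌉`.
When `α(G) ≤ 2` and `G \ K` is disconnected, a component `X` of `G \ K` and the rest of
`G \ K` are cliques with no edges between them, and then `X` together with the vertices of `K`
complete to `X`, and the complement of this set, are two cliques covering `V`. If `G \ K` is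
itself a clique, `K` and `G \ K` cover `V`; so `α(G \ K) = 2`.
-/

open Set

namespace SimpleGraph

variable {V W ι κ : Type*} {G : SimpleGraph V}

/-- An odd expansion of a complete graph whose branch sets are indexed by an arbitrary type. -/
structure IsOddModel (G : SimpleGraph V) (c : V → Bool) (B : ι → Set V) : Prop where
  pairwise_disjoint : Pairwise fun i j => Disjoint (B i) (B j)
  connected : ∀ i, ((G.bichromaticSubgraph c).induce (B i)).Connected
  exists_adj : ∀ i j, i ≠ j → ∃ u ∈ B i, ∃ v ∈ B j, G.Adj u v ∧ c u = c v

namespace IsOddModel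

variable {c : V → Bool} {B : ι → Set V}

lemma nonempty (h : G.IsOddModel c B) (i : ι) : (B i).Nonempty :=
  nonempty_coe_sort.mp (h.connected i).nonempty

lemma hasOddKMinor [Finite ι] (h : G.IsOddModel c B) : G.HasOddKMinor (Nat.card ι) := by
  let e := (Finite.equivFin ι).symm
  exact ⟨c, B ∘ e, fun i => h.nonempty _,
    fun i j hij => h.pairwise_disjoint (e.injective.ne hij), fun i => h.connected _,
    fun i j hij => h.exists_adj _ _ (e.injective.ne hij)⟩

/-- Otherwise a branch set colored only `true` and one colored only `false` could not be joined
by a monochromatic edge. -/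
lemma exists_color (h : G.IsOddModel c B) : ∃ b, ∀ i, ∃ v ∈ B i, c v = b := by
  by_contra! hb
  obtain ⟨i, hi⟩ := hb true
  obtain ⟨j, hj⟩ := hb false
  have hij : i ≠ j := by
    rintro rfl
    obtain ⟨v, hv⟩ := h.nonempty i
    cases hc : c v
    exacts [hj v hv hc, hi v hv hc]
  obtain ⟨u, hu, v, hv, -, huv⟩ := h.exists_adj i j hij
  simp_all

lemma map {H : SimpleGraph W} {c : W → Bool} {B : ι → Set W} (h : H.IsOddModel c B)
    (f : H ↪g G) {c' : V → Bool} (hc : ∀ v, c' (f v) = c v) :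
    G.IsOddModel c' fun i => f '' B i where
  pairwise_disjoint _ _ hij := (h.pairwise_disjoint hij).image f.injective.injOn
    (subset_univ _) (subset_univ _)
  connected i := by
    let φ : H.bichromaticSubgraph c →g G.bichromaticSubgraph c' :=
      ⟨f, fun {u v} huv => ⟨f.map_adj_iff.mpr huv.1, by simpa only [hc] using huv.2⟩⟩
    refine (h.connected i).map (induceHom φ (mapsTo_image f (B i))) ?_
    rintro ⟨_, u, hu, rfl⟩
    exact ⟨⟨u, hu⟩, rfl⟩
  exists_adj i j hij := by
    obtain ⟨u, hu, v, hv, huv, hc'⟩ := h.exists_adj i j hij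
    exact ⟨f u, mem_image_of_mem f hu, f v, mem_image_of_mem f hv, f.map_adj_iff.mpr huv,
      by rw [hc, hc, hc']⟩

lemma sum {B' : κ → Set V} (h : G.IsOddModel c B) (h' : G.IsOddModel c B')
    (hdisj : ∀ i j, Disjoint (B i) (B' j))
    (hadj : ∀ i j, ∃ u ∈ B i, ∃ v ∈ B' j, G.Adj u v ∧ c u = c v) :
    G.IsOddModel c (Sum.elim B B') where
  pairwise_disjoint := by
    rintro (i | i) (j | j) hij
    exacts [h.pairwise_disjoint fun e => hij (congrArg _ e), hdisj i j, (hdisj j i).symm,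
      h'.pairwise_disjoint fun e => hij (congrArg _ e)]
  connected := by
    rintro (i | i)
    exacts [h.connected i, h'.connected i]
  exists_adj := by
    rintro (i | i) (j | j) hij
    · exact h.exists_adj i j fun e => hij (congrArg _ e)
    · exact hadj i j
    · obtain ⟨u, hu, v, hv, huv, hc⟩ := hadj j i
      exact ⟨v, hv, u, hu, huv.symm, hc.symm⟩
    · exact h'.exists_adj i j fun e => hij (congrArg _ e)

end IsOddModel

lemma IsClique.isOddModel_singleton {s : Set V} (hs : G.IsClique s) {c : V → Bool} {b : Bool}
    (hc : ∀ v ∈ s, c v = b) : G.IsOddModel c fun v : s => {(v : V)} where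
  pairwise_disjoint _ _ huv := disjoint_singleton.mpr (Subtype.coe_injective.ne huv)
  connected v := by
    rw [induce_singleton_eq_top]
    exact connected_top
  exists_adj u v huv := ⟨u, rfl, v, rfl, hs u.2 v.2 (Subtype.coe_injective.ne huv),
    by rw [hc u u.2, hc v v.2]⟩

lemma hasOddKMinor_zero_s13 (G : SimpleGraph V) : G.HasOddKMinor 0 :=
  ⟨fun _ => true, finZeroElim, finZeroElim, finZeroElim, finZeroElim, finZeroElim⟩

lemma bddAbove_setOf_hasOddKMinor [Finite V] (G : SimpleGraph V) :
    BddAbove {t | G.HasOddKMinor t} := by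
  refine ⟨Nat.card V, ?_⟩
  rintro t ⟨c, B, hne, hdisj, -, -⟩
  choose x hx using hne
  have hx_inj : Function.Injective x := fun i j hij => by
    by_contra hne
    exact Set.disjoint_left.mp (hdisj hne) (hx i) (hij ▸ hx j)
  simpa using Nat.card_le_card_of_injective x hx_inj

lemma HasOddKMinor.le_oh [Finite V] {t : ℕ} (h : G.HasOddKMinor t) : t ≤ G.oh :=
  le_csSup G.bddAbove_setOf_hasOddKMinor h

lemma exists_isOddModel_oh [Finite V] (G : SimpleGraph V) :
    ∃ (c : V → Bool) (B : Fin G.oh → Set V), G.IsOddModel c B := by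
  obtain ⟨c, B, -, hdisj, hconn, hadj⟩ : G.HasOddKMinor G.oh :=
    Nat.sSup_mem ⟨0, G.hasOddKMinor_zero_s13⟩ G.bddAbove_setOf_hasOddKMinor
  exact ⟨c, B, hdisj, hconn, hadj⟩

lemma IsClique.ncard_le_oh [Finite V] {s : Set V} (hs : G.IsClique s) : s.ncard ≤ G.oh :=
  (hs.isOddModel_singleton (c := fun _ => true) fun _ _ => rfl).hasOddKMinor.le_oh

lemma card_le_two_mul_oh_of_isClique_cover [Finite V] {s t : Set V} (hs : G.IsClique s)
    (ht : G.IsClique t) (hst : s ∪ t = univ) : Nat.card V ≤ 2 * G.oh := by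
  have hcover : Nat.card V ≤ s.ncard + t.ncard := by
    rw [← ncard_univ, ← hst]
    exact ncard_union_le s t
  have := hs.ncard_le_oh
  have := ht.ncard_le_oh
  omega

lemma oh_induce_add_ncard_le_oh [Finite V] {S K : Set V} (hK : G.IsClique K)
    (hKS : ∀ u ∈ K, ∀ v ∈ S, G.Adj u v) : (G.induce S).oh + K.ncard ≤ G.oh := by
  classical
  obtain ⟨c, B, hB⟩ := (G.induce S).exists_isOddModel_oh
  obtain ⟨b, hb⟩ := hB.exists_color
  let c' : V → Bool := fun v => if h : v ∈ S then c ⟨v, h⟩ else b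
  have hc' : ∀ v : S, c' v = c v := fun v => dif_pos v.2
  have hKc' : ∀ u ∈ K, c' u = b := fun u hu =>
    dif_neg fun huS => G.loopless.irrefl u (hKS u hu u huS)
  have hmodel := (hB.map (Embedding.induce S) hc').sum (hK.isOddModel_singleton hKc')
    (fun i u => disjoint_singleton_right.mpr ?_) (fun i u => ?_)
  · simpa [Nat.card_sum, Nat.card_coe_set_eq] using hmodel.hasOddKMinor.le_oh
  · rintro ⟨v, -, hv⟩
    exact G.loopless.irrefl u (hv ▸ hKS u u.2 v v.2)
  · obtain ⟨v, hv, hcv⟩ := hb i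
    exact ⟨v, mem_image_of_mem _ hv, u, rfl, (hKS u u.2 v v.2).symm,
      by rw [hc', hcv, hKc' u u.2]⟩

lemma indepNum_induce_le [Finite V] (s : Set V) : (G.induce s).indepNum ≤ G.indepNum := by
  have hcompl : (G.induce s)ᶜ = Gᶜ.induce s := by
    ext u v
    simp [Subtype.ext_iff]
  rw [← cliqueNum_compl, ← cliqueNum_compl, hcompl]
  exact Gᶜ.cliqueNum_induce_le s

lemma two_le_indepNum_induce [Finite V] {s : Set V} (hs : ¬G.IsClique s) :
    2 ≤ (G.induce s).indepNum := by
  classical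
  obtain ⟨u, hu, v, hv, huv, hadj⟩ : ∃ u ∈ s, ∃ v ∈ s, u ≠ v ∧ ¬G.Adj u v := by
    simpa [IsClique, Set.Pairwise] using hs
  have hne : (⟨u, hu⟩ : s) ≠ ⟨v, hv⟩ := fun h => huv (congrArg Subtype.val h)
  have hind : (G.induce s).IsIndepSet ({⟨u, hu⟩, ⟨v, hv⟩} : Finset s) := by
    rw [Finset.coe_pair, IsIndepSet, Set.pairwise_pair]
    exact fun _ => ⟨hadj, fun h => hadj h.symm⟩
  simpa [Finset.card_pair hne] using hind.card_le_indepNum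

lemma adj_of_not_adj_of_not_adj [Finite V] (hα : G.indepNum ≤ 2) {u v w : V} (huv : u ≠ v)
    (hvw : v ≠ w) (huw : u ≠ w) (h₁ : ¬G.Adj u v) (h₂ : ¬G.Adj v w) : G.Adj u w := by
  classical
  by_contra h₃
  have hind : G.IsIndepSet ({u, v, w} : Finset V) := by
    simp only [Finset.coe_insert, Finset.coe_singleton, IsIndepSet]
    simp_all [Set.pairwise_insert, Set.pairwise_singleton, G.adj_comm]
  have := hind.card_le_indepNum
  rw [Finset.card_eq_three.mpr ⟨u, v, w, huv, huw, hvw, rfl⟩] at this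
  omega

lemma exists_isClique_cover_of_separation [Finite V] (hα : G.indepNum ≤ 2) {K X : Set V}
    (hK : G.IsClique K) (hXK : Disjoint X K) (hsep : ∀ x ∈ X, ∀ y ∉ K, y ∉ X → ¬G.Adj x y)
    {a b : V} (ha : a ∈ X) (hbK : b ∉ K) (hbX : b ∉ X) :
    ∃ C₁ C₂ : Set V, G.IsClique C₁ ∧ G.IsClique C₂ ∧ C₁ ∪ C₂ = univ := by
  have hXK' : ∀ x ∈ X, x ∉ K := fun x hx => Set.disjoint_left.mp hXK hx
  let C := X ∪ {k ∈ K | ∀ x ∈ X, G.Adj k x}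
  refine ⟨C, Cᶜ, ?_, ?_, union_compl_self C⟩
  · rintro u (hu | ⟨huK, hu⟩) v (hv | ⟨hvK, hv⟩) huv
    · refine adj_of_not_adj_of_not_adj hα (v := b) ?_ ?_ huv (hsep u hu b hbK hbX) ?_
      exacts [fun h => hbX (h ▸ hu), fun h => hbX (h ▸ hv),
        fun h => hsep v hv b hbK hbX h.symm]
    · exact (hv u hu).symm
    · exact hu v hv
    · exact hK huK hvK huv
  · intro u hu v hv huv
    simp only [C, mem_compl_iff, mem_union, mem_sep_iff, not_or, not_and, not_forall] at hu hv
    by_cases huK : u ∈ K <;> by_cases hvK : v ∈ K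
    · exact hK huK hvK huv
    · obtain ⟨x, hx, hux⟩ := hu.2 huK
      exact adj_of_not_adj_of_not_adj hα (v := x) (fun h => hXK' x hx (h ▸ huK))
        (fun h => hv.1 (h ▸ hx)) huv hux (hsep x hx v hvK hv.1)
    · obtain ⟨x, hx, hvx⟩ := hv.2 hvK
      exact (adj_of_not_adj_of_not_adj hα (v := x) (w := u) (fun h => hXK' x hx (h ▸ hvK))
        (fun h => hu.1 (h ▸ hx)) huv.symm hvx (hsep x hx u huK hu.1)).symm
    · exact adj_of_not_adj_of_not_adj hα (fun h => hu.1 (h ▸ ha)) (fun h => hv.1 (h ▸ ha)) huv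
        (fun h => hsep a ha u huK hu.1 h.symm) (hsep a ha v hvK hv.1)

lemma exists_isClique_cover_of_not_connected [Finite V] (hα : G.indepNum ≤ 2) {K : Set V}
    (hK : G.IsClique K) (h : ¬(G.induce Kᶜ).Connected) :
    ∃ C₁ C₂ : Set V, G.IsClique C₁ ∧ G.IsClique C₂ ∧ C₁ ∪ C₂ = univ := by
  rw [connected_iff, not_and_or] at h
  rcases h with h | h
  · obtain ⟨a, b, hab⟩ : ∃ a b, ¬(G.induce Kᶜ).Reachable a b := by simpa [Preconnected] using h
    let X : Set V := {v | ∃ hv : v ∉ K, (G.induce Kᶜ).Reachable a ⟨v, hv⟩}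
    refine exists_isClique_cover_of_separation hα hK (X := X)
      (Set.disjoint_left.mpr fun v hv => hv.1) ?_ ⟨a.2, .rfl⟩ b.2 fun hb => hab hb.2
    rintro x ⟨hxK, hx⟩ y hyK hyX hxy
    exact hyX ⟨hyK, hx.trans (Adj.reachable (G := G.induce Kᶜ) (u := ⟨x, hxK⟩) hxy)⟩
  · rw [not_nonempty_iff, isEmpty_coe_sort, compl_empty_iff] at h
    exact ⟨K, ∅, hK, isClique_empty, by simp [h]⟩

end SimpleGraph

theorem statement13 {V : Type*} [Fintype V] (G : SimpleGraph V)
    (hα : G.indepNum' ≤ 2) (hoh : G.oh < (Fintype.card V + 1) / 2)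
    (hmin : ∀ s : Finset V, s ≠ Finset.univ →
      (s.card + 1) / 2 ≤ (G.induce (s : Set V)).oh) :
    ∀ K : Finset V, K.Nonempty → G.IsClique (K : Set V) →
      (¬ ∀ u ∈ K, ∀ v, v ∉ K → G.Adj u v) ∧
      (G.induce ((K : Set V)ᶜ)).Connected ∧
      (G.induce ((K : Set V)ᶜ)).indepNum' = 2 := by
  classical
  intro K hKne hK
  rw [indepNum', cliqueNum_compl] at hα
  have hKn : K.card ≤ Fintype.card V := K.card_le_univ
  have hK₁ : 1 ≤ K.card := hKne.card_pos
  have no_cover (C₁ C₂ : Set V) (h₁ : G.IsClique C₁) (h₂ : G.IsClique C₂)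
      (h : C₁ ∪ C₂ = univ) : False := by
    have := card_le_two_mul_oh_of_isClique_cover h₁ h₂ h
    rw [Nat.card_eq_fintype_card] at this
    omega
  refine ⟨fun hcomp => ?_, ?_, ?_⟩
  · have hrest := hmin Kᶜ (Finset.compl_ne_univ_iff_nonempty K |>.mpr hKne)
    have hjoin := oh_induce_add_ncard_le_oh (S := ↑Kᶜ) hK
      fun u hu v hv => hcomp u hu v (Finset.mem_compl.mp hv)
    rw [Finset.card_compl] at hrest
    rw [ncard_coe_finset] at hjoin
    omega
  · by_contra h
    obtain ⟨C₁, C₂, h₁, h₂, h⟩ := exists_isClique_cover_of_not_connected hα hK h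
    exact no_cover C₁ C₂ h₁ h₂ h
  · rw [indepNum', cliqueNum_compl]
    exact le_antisymm ((indepNum_induce_le _).trans hα)
      (two_le_indepNum_induce fun h => no_cover _ _ hK h (union_compl_self _))
end
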